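/- arXiv:2412.03380 — 2 statements merged into one kernel-verified Lean document; each statement's English description precedes it below -/
import Mathlib

section
/- Let p, q : S → (0, ∞) be probability densities on a measure space (S, μ) (i.e., ∫ p dμ = ∫ q dμ = 1) such that the ratio p/q is bounded and bounded away from 0. If H(p,q) < 1, then the L¹ distance satisfies ∫ |p − q| dμ ≤ sup(p/q) − inf(p/q) ≤ 2·H(p,q)/(1 − H(p,q)). -/
open MeasureTheory

/-- If `p, q` are everywhere-positive probability densities on `(S, μ)` with ratio
bounded and bounded away from zero, and the Hilbert pseudo-metric
`H = (1 - inf(p/q)/sup(p/q))/(1 + inf(p/q)/sup(p/q))` satisfies `H < 1`, then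
`∫ |p - q| dμ ≤ sup(p/q) - inf(p/q) ≤ 2 H / (1 - H)`. -/
theorem L1_le_hilbert_bound {S : Type*} [MeasurableSpace S] [Nonempty S]
    (μ : Measure S) (p q : S → ℝ)
    (hp : ∀ x, 0 < p x) (hq : ∀ x, 0 < q x)
    (hpI : Integrable p μ) (hqI : Integrable q μ)
    (hpint : ∫ x, p x ∂μ = 1) (hqint : ∫ x, q x ∂μ = 1)
    (c C : ℝ) (hc : 0 < c)
    (hbd : ∀ x, c ≤ p x / q x ∧ p x / q x ≤ C)
    (H : ℝ)
    (hH : H = (1 - (⨅ x, p x / q x) / (⨆ x, p x / q x)) /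
              (1 + (⨅ x, p x / q x) / (⨆ x, p x / q x)))
    (hH1 : H < 1) :
    (∫ x, |p x - q x| ∂μ) ≤ (⨆ x, p x / q x) - (⨅ x, p x / q x) ∧
      (⨆ x, p x / q x) - (⨅ x, p x / q x) ≤ 2 * H / (1 - H) := by
  set m := ⨅ x, p x / q x with hm
  set M := ⨆ x, p x / q x with hMdef
  have hbb : BddBelow (Set.range fun x => p x / q x) :=
    ⟨c, by rintro _ ⟨x, rfl⟩; exact (hbd x).1⟩
  have hba : BddAbove (Set.range fun x => p x / q x) :=
    ⟨C, by rintro _ ⟨x, rfl⟩; exact (hbd x).2⟩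
  have hmle : ∀ x, m ≤ p x / q x := fun x => ciInf_le hbb x
  have hMge : ∀ x, p x / q x ≤ M := fun x => le_ciSup hba x
  have hcm : c ≤ m := le_ciInf fun x => (hbd x).1
  have hm0 : 0 < m := lt_of_lt_of_le hc hcm
  have hlow : ∀ x, m * q x ≤ p x := fun x =>
    (le_div_iff₀ (hq x)).mp (hmle x)
  have hhigh : ∀ x, p x ≤ M * q x := fun x =>
    (div_le_iff₀ (hq x)).mp (hMge x)
  have hm1 : m ≤ 1 := by
    have := integral_mono (hqI.const_mul m) hpI hlow
    rwa [integral_const_mul, hqint, hpint, mul_one] at this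
  have hM1 : 1 ≤ M := by
    have := integral_mono hpI (hqI.const_mul M) hhigh
    rwa [integral_const_mul, hqint, hpint, mul_one] at this
  have hM0 : 0 < M := lt_of_lt_of_le one_pos hM1
  constructor
  · have hptw : ∀ x, |p x - q x| ≤ (M - m) * q x := by
      intro x
      rw [abs_le]
      constructor
      · nlinarith [hlow x, hq x]
      · nlinarith [hhigh x, hq x]
    have := integral_mono ((hpI.sub hqI).abs) (hqI.const_mul (M - m)) hptw
    rwa [integral_const_mul, hqint, mul_one] at this
  · have h1 : (0:ℝ) < M + m := by linarith
    have hHval : H = (M - m) / (M + m) := by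
      rw [hH]
      field_simp [hM0.ne', h1.ne']
    have h1H : (1:ℝ) - (M - m) / (M + m) = 2 * m / (M + m) := by
      field_simp
      ring
    have : 2 * H / (1 - H) = (M - m) / m := by
      rw [hHval, h1H]
      field_simp
    rw [this, le_div_iff₀ hm0]
    nlinarith
end

section
/- Let (P_t)_{t≥0} be a Feller Markov semigroup on a compact metric space S, acting continuously on initial distributions, and fix ν ∈ P(S). Define the time-averaged measures μ_T(A) := (1/T)∫₀^T (ν P_t)(A) dt. Then the family {μ_T : T ≥ 1} is tight, and any weak limit point μ₀ of a sequence μ_{T_n} with T_n → ∞ is an invariant measure for the semigroup: ν₀ P_s = ν₀ for all s ≥ 0. -/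
open MeasureTheory ProbabilityTheory Filter
open scoped Topology ENNReal

/-!
Write `F t = ∫ f d(ν P_t)` and `P_s f x = ∫ f d(P_s x)`. By the semigroup property,
`∫ P_s f dμ_T = (1/T) ∫₀ᵀ F (t + s) dt`, which differs from `∫ f dμ_T = (1/T) ∫₀ᵀ F t dt` by at most
`2 s ‖f‖ / T`, since the two time windows differ by two intervals of length `s`. The Feller
property makes `P_s f` continuous, so both sides pass to the weak limit: `∫ f d(μ₀ P_s)` and
`∫ f dμ₀` agree for every bounded continuous `f`, which determines the measure.
Tightness is free, `S` itself being compact.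
-/

open Set BoundedContinuousFunction

lemma MeasureTheory.Measure.integral_comp_kernel {α β E : Type*} [MeasurableSpace α]
    [MeasurableSpace β] [NormedAddCommGroup E] [NormedSpace ℝ E] {μ : Measure α}
    {κ : Kernel α β} {f : β → E} (hf : Integrable f (κ ∘ₘ μ)) :
    ∫ y, f y ∂(κ ∘ₘ μ) = ∫ x, ∫ y, f y ∂κ x ∂μ := by
  rw [Measure.comp_eq_comp_const_apply] at hf ⊢
  rw [Kernel.integral_comp hf, Kernel.const_apply]

section ShiftedAverage

variable {E : Type*} [NormedAddCommGroup E] [NormedSpace ℝ E] {F : ℝ → E} {C : ℝ}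

lemma norm_intervalIntegral_comp_add_right_sub_le (hFm : AEStronglyMeasurable F volume)
    (hFC : ∀ t, ‖F t‖ ≤ C) (T s : ℝ) :
    ‖(∫ t in 0..T, F (t + s)) - ∫ t in 0..T, F t‖ ≤ 2 * C * |s| := by
  have hF : ∀ a b, IntervalIntegrable F volume a b := fun a b =>
    ⟨Measure.integrableOn_of_bounded measure_Ioc_lt_top.ne hFm (ae_of_all _ hFC),
      Measure.integrableOn_of_bounded measure_Ioc_lt_top.ne hFm (ae_of_all _ hFC)⟩
  rw [intervalIntegral.integral_comp_add_right, zero_add,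
    intervalIntegral.integral_interval_sub_interval_comm (hF _ _) (hF _ _) (hF _ _)]
  calc _ ≤ ‖∫ t in s..0, F t‖ + ‖∫ t in T + s..T, F t‖ := norm_sub_le _ _
    _ ≤ C * |0 - s| + C * |T - (T + s)| := by
      gcongr <;> exact intervalIntegral.norm_integral_le_of_norm_le_const fun t _ => hFC t
    _ = 2 * C * |s| := by rw [zero_sub, abs_neg, sub_add_cancel_left, abs_neg]; ring

lemma tendsto_inv_smul_intervalIntegral_comp_add_right_sub
    (hFm : AEStronglyMeasurable F volume) (hFC : ∀ t, ‖F t‖ ≤ C) (s : ℝ) :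
    Tendsto (fun T => T⁻¹ • ((∫ t in 0..T, F (t + s)) - ∫ t in 0..T, F t)) atTop (𝓝 0) := by
  have hbound : Tendsto (fun T : ℝ => T⁻¹ * (2 * C * |s|)) atTop (𝓝 0) := by
    simpa using tendsto_inv_atTop_zero.mul_const (2 * C * |s|)
  refine squeeze_zero_norm' ?_ hbound
  filter_upwards [eventually_ge_atTop 0] with T hT
  rw [norm_smul, Real.norm_of_nonneg (inv_nonneg.mpr hT)]
  gcongr
  exact norm_intervalIntegral_comp_add_right_sub_le hFm hFC T s

end ShiftedAverage

namespace ProbabilityTheory.Kernel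

variable {S : Type*} [MeasurableSpace S]

noncomputable def timeAverage (η : Kernel ℝ S) (T : ℝ) : Measure S :=
  (ENNReal.ofReal T)⁻¹ • (η ∘ₘ volume.restrict (Ioc 0 T))

lemma integral_timeAverage [TopologicalSpace S] [OpensMeasurableSpace S] (η : Kernel ℝ S)
    [IsFiniteKernel η] (f : S →ᵇ ℝ) {T : ℝ} (hT : 0 ≤ T) :
    ∫ x, f x ∂η.timeAverage T = T⁻¹ * ∫ t in 0..T, ∫ x, f x ∂η t := by
  rw [timeAverage, integral_smul_measure, Measure.integral_comp_kernel (f.integrable _),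
    intervalIntegral.integral_of_le hT, ENNReal.toReal_inv, ENNReal.toReal_ofReal hT, smul_eq_mul]

/-- The law `ν P_t` at time `t` of the process started from `ν`, as a kernel in `t`. -/
noncomputable def orbit (κ : ℝ → Kernel S S) (ν : Measure S)
    (hκν : ∀ A, MeasurableSet A → Measurable fun t => (κ t ∘ₘ ν) A) : Kernel ℝ S where
  toFun t := κ t ∘ₘ ν
  measurable' := Measure.measurable_of_measurable_coe _ hκν

variable {κ : ℝ → Kernel S S} {ν : Measure S}
  {hκν : ∀ A, MeasurableSet A → Measurable fun t => (κ t ∘ₘ ν) A}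

instance [∀ t, IsMarkovKernel (κ t)] [IsProbabilityMeasure ν] :
    IsMarkovKernel (orbit κ ν hκν) :=
  ⟨fun t => by dsimp [orbit]; infer_instance⟩

lemma comp_orbit (hsemigroup : ∀ s t : ℝ, 0 ≤ s → 0 ≤ t → κ (s + t) = κ t ∘ₖ κ s)
    {s t : ℝ} (hs : 0 ≤ s) (ht : 0 ≤ t) :
    κ s ∘ₘ orbit κ ν hκν t = orbit κ ν hκν (t + s) := by
  simp only [orbit, coe_mk]
  rw [Measure.comp_assoc, hsemigroup t s ht hs]

lemma tendsto_integral_timeAverage_sub [TopologicalSpace S] [OpensMeasurableSpace S]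
    [∀ t, IsMarkovKernel (κ t)] [IsProbabilityMeasure ν]
    (hsemigroup : ∀ s t : ℝ, 0 ≤ s → 0 ≤ t → κ (s + t) = κ t ∘ₖ κ s) {s : ℝ} (hs : 0 ≤ s)
    (f g : S →ᵇ ℝ) (hg : ∀ x, g x = ∫ y, f y ∂κ s x) :
    Tendsto (fun T => ∫ x, g x ∂(orbit κ ν hκν).timeAverage T -
      ∫ x, f x ∂(orbit κ ν hκν).timeAverage T) atTop (𝓝 0) := by
  set F : ℝ → ℝ := fun t => ∫ x, f x ∂orbit κ ν hκν t
  have hFm : AEStronglyMeasurable F volume :=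
    f.continuous.measurable.stronglyMeasurable.integral_kernel.aestronglyMeasurable
  have hFC : ∀ t, ‖F t‖ ≤ ‖f‖ := fun t => f.norm_integral_le_norm _
  have hgF : ∀ t, 0 ≤ t → ∫ x, g x ∂orbit κ ν hκν t = F (t + s) := fun t ht => by
    simp only [hg, F, ← comp_orbit hsemigroup hs ht]
    exact (Measure.integral_comp_kernel (f.integrable _)).symm
  refine (tendsto_inv_smul_intervalIntegral_comp_add_right_sub hFm hFC s).congr' ?_
  filter_upwards [eventually_ge_atTop 0] with T hT
  have hshift : ∫ t in 0..T, ∫ x, g x ∂orbit κ ν hκν t = ∫ t in 0..T, F (t + s) :=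
    intervalIntegral.integral_congr fun t ht => hgF t (by rw [uIcc_of_le hT] at ht; exact ht.1)
  rw [integral_timeAverage _ _ hT, integral_timeAverage _ _ hT, hshift, smul_eq_mul, mul_sub]

theorem comp_eq_of_tendsto_integral_timeAverage {ι : Type*} [TopologicalSpace S]
    [HasOuterApproxClosed S] [BorelSpace S] [∀ t, IsMarkovKernel (κ t)] [IsProbabilityMeasure ν]
    (hsemigroup : ∀ s t : ℝ, 0 ≤ s → 0 ≤ t → κ (s + t) = κ t ∘ₖ κ s) {s : ℝ} (hs : 0 ≤ s)
    (hFeller : ∀ f : S → ℝ, Continuous f → Continuous fun x => ∫ y, f y ∂κ s x)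
    {l : Filter ι} [l.NeBot] {Tn : ι → ℝ} (hTn : Tendsto Tn l atTop)
    {μ₀ : Measure S} [IsFiniteMeasure μ₀]
    (hweak : ∀ f : S →ᵇ ℝ,
      Tendsto (fun n => ∫ x, f x ∂(orbit κ ν hκν).timeAverage (Tn n)) l (𝓝 (∫ x, f x ∂μ₀))) :
    κ s ∘ₘ μ₀ = μ₀ := by
  refine ext_of_forall_integral_eq_of_IsFiniteMeasure fun f => ?_
  let g : S →ᵇ ℝ := .ofNormedAddCommGroup _ (hFeller f f.continuous) ‖f‖
    fun x => f.norm_integral_le_norm (κ s x)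
  have hg_lim : Tendsto (fun n => ∫ x, g x ∂(orbit κ ν hκν).timeAverage (Tn n)) l
      (𝓝 (∫ x, f x ∂μ₀)) := by
    have hdiff := tendsto_integral_timeAverage_sub (hκν := hκν) hsemigroup hs f g fun _ => rfl
    simpa using (hdiff.comp hTn).add (hweak f)
  rw [Measure.integral_comp_kernel (f.integrable _)]
  exact tendsto_nhds_unique (hweak g) hg_lim

end ProbabilityTheory.Kernel

open ProbabilityTheory.Kernel in
/-- Krylov–Bogolyubov on a compact metric space: for a Feller Markov semigroup
`(κ_t)` and initial law `ν`, the time averages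
`μ_T = (1/T) ∫₀^T ν κ_t dt` form a tight family `{μ_T : T ≥ 1}`, and any weak limit
point along `T_n → ∞` is invariant for the semigroup. -/
theorem krylov_bogolyubov_time_averages
    {S : Type*} [MeasurableSpace S] [MetricSpace S] [CompactSpace S] [BorelSpace S]
    (κ : ℝ → Kernel S S) (hMarkov : ∀ t, IsMarkovKernel (κ t))
    (hsemigroup : ∀ s t : ℝ, 0 ≤ s → 0 ≤ t → κ (s + t) = (κ t) ∘ₖ (κ s))
    (hFeller : ∀ t : ℝ, 0 ≤ t → ∀ f : S → ℝ, Continuous f →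
      Continuous fun x => ∫ y, f y ∂(κ t x))
    (ν : Measure S) [IsProbabilityMeasure ν]
    (hmeas : ∀ A : Set S, MeasurableSet A →
      Measurable fun t : ℝ => (Measure.bind ν (fun x => κ t x)) A)
    (μT : ℝ → Measure S)
    (hμT : ∀ T : ℝ, 0 < T → μT T = (ENNReal.ofReal T)⁻¹ •
      Measure.bind (volume.restrict (Set.Ioc (0 : ℝ) T))
        (fun t => Measure.bind ν (fun x => κ t x))) :
    (∀ ε : ℝ≥0∞, 0 < ε → ∃ K : Set S, IsCompact K ∧
      ∀ T : ℝ, 1 ≤ T → μT T Kᶜ ≤ ε) ∧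
    ∀ (Tn : ℕ → ℝ) (μ₀ : Measure S), IsProbabilityMeasure μ₀ →
      (∀ n, 1 ≤ Tn n) → Tendsto Tn atTop atTop →
      (∀ f : S → ℝ, Continuous f →
        Tendsto (fun n => ∫ x, f x ∂(μT (Tn n))) atTop (𝓝 (∫ x, f x ∂μ₀))) →
      ∀ s : ℝ, 0 ≤ s → Measure.bind μ₀ (fun x => κ s x) = μ₀ := by
  refine ⟨fun ε _ => ⟨univ, isCompact_univ, fun T _ => by simp⟩, ?_⟩
  intro Tn μ₀ _ hTn1 hTn hweak s hs
  have hμT_orbit : ∀ n, μT (Tn n) = (orbit κ ν hmeas).timeAverage (Tn n) := fun n =>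
    hμT _ (one_pos.trans_le (hTn1 n))
  exact comp_eq_of_tendsto_integral_timeAverage hsemigroup hs (hFeller s hs) hTn
    fun f => by simpa only [hμT_orbit] using hweak f f.continuous
end
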